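/- For every integer n ≥ 1, A(n) = Σ_{i=0}^{n−1} A(i)·S(n−i). -/
import Mathlib


/-- One step in the random Fibonacci tree; `true` means a right branch:
from the pair `(x, y)`, a right branch leads to `(y, x + y)` and a left
branch leads to `(y, |x - y|)`. -/
def fibStep (p : ℤ × ℤ) (b : Bool) : ℤ × ℤ :=
  if b then (p.2, p.1 + p.2) else (p.2, |p.1 - p.2|)

/-- `fibPairs w i = (g_i, g_{i+1})` for the walk determined by the branch
sequence `w`, where `w j` is the `(j+1)`-st branch choice. -/
def fibPairs (w : ℕ → Bool) : ℕ → ℤ × ℤ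
  | 0 => (1, 1)
  | i + 1 => fibStep (fibPairs w i) (w i)

/-- Extend a branch sequence of length `m` by dummy values. -/
def extendW {m : ℕ} (w : Fin m → Bool) : ℕ → Bool :=
  fun i => if h : i < m then w ⟨i, h⟩ else false

/-- The ending pair `(g_m, g_{m+1})` of the walk determined by a branch
sequence of length `m`. -/
def endPair {m : ℕ} (w : Fin m → Bool) : ℤ × ℤ := fibPairs (extendW w) m

/-- `A(n)`: the number of branch sequences of length `3n` whose walk has
ending pair `(1,1)`. -/
noncomputable def A11 (n : ℕ) : ℕ :=
  Nat.card {w : Fin (3 * n) → Bool // endPair w = (1, 1)}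

/-- `S(n)`: the number of branch sequences of length `3n` whose walk has ending
pair `(1,1)` and no index `1 ≤ i ≤ 3n - 1` with `(g_i, g_{i+1}) = (1,1)`. -/
noncomputable def Sprim (n : ℕ) : ℕ :=
  Nat.card {w : Fin (3 * n) → Bool //
    endPair w = (1, 1) ∧
    ∀ i, 1 ≤ i → i ≤ 3 * n - 1 → fibPairs (extendW w) i ≠ (1, 1)}

/-- `B(n)`: the number of branch sequences of length `3n` whose walk has ending
pair `(1,1)` and satisfies `g_i ≠ 0` for all `0 ≤ i ≤ 3n + 1`. -/
noncomputable def Bnz (n : ℕ) : ℕ :=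
  Nat.card {w : Fin (3 * n) → Bool //
    endPair w = (1, 1) ∧
    ∀ i, i ≤ 3 * n + 1 → (fibPairs (extendW w) i).1 ≠ 0}

/-- `m(a,b)`: `0` if `a, b` both odd, `1` if `a` odd and `b` even,
`2` if `a` even (and `b` odd). -/
def pairOffset (a b : ℕ) : ℕ :=
  if Odd a then (if Odd b then 0 else 1) else 2

/-- `A_{(a,b)}(n)`: the number of branch sequences of length `3n + m(a,b)`
whose walk has ending pair `(a, b)`. -/
noncomputable def Aab (a b : ℕ) (n : ℕ) : ℕ :=
  Nat.card {w : Fin (3 * n + pairOffset a b) → Bool //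
    endPair w = ((a : ℤ), (b : ℤ))}

/-- `SW_{(1,1)}(a,b)`: the least `m` such that some branch sequence of
length `m` has walk with ending pair `(a, b)`. -/
noncomputable def SW (a b : ℕ) : ℕ :=
  sInf {m : ℕ | ∃ w : Fin m → Bool, endPair w = ((a : ℤ), (b : ℤ))}

lemma fibPairs_succ (w : ℕ → Bool) (i : ℕ) :
    fibPairs w (i + 1) = fibStep (fibPairs w i) (w i) := rfl

lemma fibPairs_congr (w w' : ℕ → Bool) (i : ℕ) (h : ∀ j < i, w j = w' j) :
    fibPairs w i = fibPairs w' i := by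
  induction i with
  | zero => rfl
  | succ i ih =>
    rw [fibPairs_succ, fibPairs_succ, ih (fun j hj => h j (by omega)), h i (by omega)]

lemma fibPairs_add (w : ℕ → Bool) (m : ℕ) (h : fibPairs w m = (1, 1)) (i : ℕ) :
    fibPairs w (m + i) = fibPairs (fun j => w (m + j)) i := by
  induction i with
  | zero => exact h
  | succ i ih => rw [show m + (i+1) = (m+i) + 1 by omega, fibPairs_succ, ih]; rfl

lemma fibPairs_parity (w : ℕ → Bool) (i : ℕ) :
    (Even (fibPairs w i).1 ↔ i % 3 = 2) ∧ (Even (fibPairs w i).2 ↔ i % 3 = 1) := by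
  induction i with
  | zero =>
    constructor <;> · show Even (1:ℤ) ↔ _ ; rw [Int.even_iff]; omega
  | succ i ih =>
    obtain ⟨h1, h2⟩ := ih
    rw [fibPairs_succ]
    cases hw : w i <;> simp only [fibStep, Bool.false_eq_true, ite_true, ite_false] <;>
        constructor
    · rw [h2]; omega
    · rw [even_abs, Int.even_sub, h1, h2]; omega
    · rw [h2]; omega
    · rw [Int.even_add, h1, h2]; omega

lemma mod3_eq_zero {w : ℕ → Bool} {i : ℕ} (h : fibPairs w i = (1, 1)) : i % 3 = 0 := by
  obtain ⟨h1, h2⟩ := fibPairs_parity w i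
  have ha : (fibPairs w i).1 = 1 := by rw [h]
  have hb : (fibPairs w i).2 = 1 := by rw [h]
  rw [ha, Int.even_iff] at h1
  rw [hb, Int.even_iff] at h2
  omega

/-- The concatenation of a prefix of length `3*(j+1)` and a suffix. -/
def glueFun (n j : ℕ) (s : Fin (3 * (j + 1)) → Bool)
    (u : Fin (3 * (n - (j + 1))) → Bool) : Fin (3 * n) → Bool :=
  fun t => if h : (t : ℕ) < 3 * (j + 1) then s ⟨t, h⟩
    else u ⟨(t : ℕ) - 3 * (j + 1), by have := t.isLt; omega⟩

lemma glue_low {n j : ℕ} (hj : j < n) (s : Fin (3 * (j + 1)) → Bool)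
    (u : Fin (3 * (n - (j + 1))) → Bool) {t : ℕ} (ht : t ≤ 3 * (j + 1)) :
    fibPairs (extendW (glueFun n j s u)) t = fibPairs (extendW s) t := by
  apply fibPairs_congr
  intro q hq
  have hq2 : q < 3 * (j + 1) := by omega
  have hq3 : q < 3 * n := by omega
  simp only [extendW, glueFun, hq2, hq3, dif_pos]

lemma glue_high {n j : ℕ} (hj : j < n) (s : Fin (3 * (j + 1)) → Bool)
    (u : Fin (3 * (n - (j + 1))) → Bool) {q : ℕ} (hq : q < 3 * (n - (j + 1))) :
    extendW (glueFun n j s u) (3 * (j + 1) + q) = extendW u q := by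
  have h1 : 3 * (j + 1) + q < 3 * n := by omega
  have h2 : ¬ (3 * (j + 1) + q < 3 * (j + 1)) := by omega
  have h3 : 3 * (j + 1) + q - 3 * (j + 1) = q := by omega
  simp only [extendW, glueFun, h1, dif_pos, h2, dif_neg, not_false_iff, hq, h3]

lemma glue_end {n j : ℕ} (hj : j < n) (s : Fin (3 * (j + 1)) → Bool)
    (u : Fin (3 * (n - (j + 1))) → Bool) (hs : endPair s = (1, 1))
    (hu : endPair u = (1, 1)) : endPair (glueFun n j s u) = (1, 1) := by
  have hmid : fibPairs (extendW (glueFun n j s u)) (3 * (j + 1)) = (1, 1) := by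
    rw [glue_low hj s u le_rfl]; exact hs
  show fibPairs (extendW (glueFun n j s u)) (3 * n) = (1, 1)
  have hlen : 3 * (j + 1) + 3 * (n - (j + 1)) = 3 * n := by omega
  rw [← congrArg (fibPairs (extendW (glueFun n j s u))) hlen, fibPairs_add _ _ hmid]
  rw [← hu]
  exact fibPairs_congr _ _ _ fun q hq => glue_high hj s u (by omega)

abbrev FibT (m : ℕ) := {w : Fin (3 * m) → Bool // endPair w = (1, 1)}

abbrev PrimT (k : ℕ) := {s : Fin (3 * k) → Bool // endPair s = (1, 1) ∧
    ∀ i, 1 ≤ i → i ≤ 3 * k - 1 → fibPairs (extendW s) i ≠ (1, 1)}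

/-- Restriction of a branch sequence to an initial segment. -/
def takeF (m k : ℕ) (hk : k ≤ m) (w : Fin m → Bool) : Fin k → Bool :=
  fun t => w ⟨t.1, lt_of_lt_of_le t.isLt hk⟩

/-- Restriction of a branch sequence to a later segment. -/
def dropF (m a L : ℕ) (h : a + L ≤ m) (w : Fin m → Bool) : Fin L → Bool :=
  fun t => w ⟨a + t.1, by have := t.isLt; omega⟩

lemma fibPairs_takeF (m k : ℕ) (hk : k ≤ m) (w : Fin m → Bool) {t : ℕ} (ht : t ≤ k) :
    fibPairs (extendW (takeF m k hk w)) t = fibPairs (extendW w) t := by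
  apply fibPairs_congr
  intro q hq
  have hq1 : q < k := by omega
  have hq2 : q < m := by omega
  simp only [extendW, takeF, hq1, hq2, dif_pos]

lemma fibPairs_dropF (m a L : ℕ) (h : a + L ≤ m) (w : Fin m → Bool) {t : ℕ} (ht : t ≤ L) :
    fibPairs (extendW (dropF m a L h w)) t = fibPairs (fun q => extendW w (a + q)) t := by
  apply fibPairs_congr
  intro q hq
  have hq1 : q < L := by omega
  have hq2 : a + q < m := by omega
  simp only [extendW, dropF, hq1, hq2, dif_pos]

def glueMap (n : ℕ) (x : Σ j : Fin n, (PrimT (j.1 + 1) × FibT (n - (j.1 + 1)))) : FibT n :=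
  ⟨glueFun n x.1.1 x.2.1.1 x.2.2.1, glue_end x.1.2 _ _ x.2.1.2.1 x.2.2.2⟩

lemma glueMap_bijective (n : ℕ) (hn : 1 ≤ n) : Function.Bijective (glueMap n) := by
  constructor
  · rintro ⟨jf, ⟨s, hs1, hs2⟩, ⟨u, hu⟩⟩ ⟨jf', ⟨s', hs1', hs2'⟩, ⟨u', hu'⟩⟩ heq
    have hfun : glueFun n jf.1 s u = glueFun n jf'.1 s' u' := congrArg Subtype.val heq
    have hmid : fibPairs (extendW (glueFun n jf.1 s u)) (3 * (jf.1 + 1)) = (1, 1) := by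
      rw [glue_low jf.isLt s u le_rfl]; exact hs1
    have hmid' : fibPairs (extendW (glueFun n jf'.1 s' u')) (3 * (jf'.1 + 1)) = (1, 1) := by
      rw [glue_low jf'.isLt s' u' le_rfl]; exact hs1'
    have hjj : jf = jf' := by
      refine Fin.ext ?_
      by_contra hne
      rcases Nat.lt_or_ge jf.1 jf'.1 with h | h
      · have h1 : fibPairs (extendW (glueFun n jf'.1 s' u')) (3 * (jf.1 + 1)) = (1, 1) := by
          rw [← hfun]; exact hmid
        rw [glue_low jf'.isLt s' u' (by omega)] at h1
        exact hs2' (3 * (jf.1 + 1)) (by omega) (by omega) h1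
      · have h' : jf'.1 < jf.1 := by omega
        have h1 : fibPairs (extendW (glueFun n jf.1 s u)) (3 * (jf'.1 + 1)) = (1, 1) := by
          rw [hfun]; exact hmid'
        rw [glue_low jf.isLt s u (by omega)] at h1
        exact hs2 (3 * (jf'.1 + 1)) (by omega) (by omega) h1
    subst hjj
    have hss : s = s' := by
      funext t
      have h := congrFun hfun ⟨t.1, by have := t.isLt; have := jf.isLt; omega⟩
      simpa only [glueFun, t.isLt, dif_pos, Fin.eta] using h
    have huu : u = u' := by
      funext t
      have h := congrFun hfun ⟨3 * (jf.1 + 1) + t.1, by have := t.isLt; have := jf.isLt; omega⟩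
      have h2 : ¬ (3 * (jf.1 + 1) + t.1 < 3 * (jf.1 + 1)) := by omega
      have h3 : 3 * (jf.1 + 1) + t.1 - 3 * (jf.1 + 1) = t.1 := by omega
      simpa only [glueFun, h2, dif_neg, not_false_iff, h3, Fin.eta] using h
    subst hss; subst huu
    rfl
  · rintro ⟨w, hw⟩
    have hne : {t | 1 ≤ t ∧ fibPairs (extendW w) t = (1, 1)}.Nonempty :=
      ⟨3 * n, ⟨by omega, hw⟩⟩
    set r := sInf {t | 1 ≤ t ∧ fibPairs (extendW w) t = (1, 1)} with hrdef
    obtain ⟨hr1, hrp⟩ := Nat.sInf_mem hne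
    have hrle : r ≤ 3 * n := Nat.sInf_le ⟨by omega, hw⟩
    have hmin : ∀ t, 1 ≤ t → t < r → fibPairs (extendW w) t ≠ (1, 1) :=
      fun t h1 h2 hp => Nat.notMem_of_lt_sInf h2 ⟨h1, hp⟩
    have hmod := mod3_eq_zero hrp
    set j := r / 3 - 1 with hjdef
    have hjr : 3 * (j + 1) = r := by omega
    have hjn : j < n := by omega
    have hmid2 : fibPairs (extendW w) (3 * (j + 1)) = (1, 1) := by rw [hjr]; exact hrp
    refine ⟨⟨⟨j, hjn⟩,
      ⟨takeF (3 * n) (3 * (j + 1)) (by omega) w, ?_, ?_⟩,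
      ⟨dropF (3 * n) (3 * (j + 1)) (3 * (n - (j + 1))) (by omega) w, ?_⟩⟩, ?_⟩
    · show fibPairs (extendW _) (3 * (j + 1)) = (1, 1)
      rw [fibPairs_takeF _ _ _ _ le_rfl]
      exact hmid2
    · intro i hi1 hi2 hcon
      have hvj : ((⟨j, hjn⟩ : Fin n) : ℕ) = j := rfl
      rw [fibPairs_takeF _ _ _ _ (by omega : i ≤ 3 * (j + 1))] at hcon
      exact hmin i hi1 (by omega) hcon
    · show fibPairs (extendW _) (3 * (n - (j + 1))) = (1, 1)
      rw [fibPairs_dropF _ _ _ _ _ le_rfl,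
        ← fibPairs_add (extendW w) (3 * (j + 1)) hmid2,
        congrArg (fibPairs (extendW w)) (show 3 * (j + 1) + 3 * (n - (j + 1)) = 3 * n by omega)]
      exact hw
    · apply Subtype.ext
      show glueFun n j _ _ = w
      funext t
      by_cases h : (t : ℕ) < 3 * (j + 1)
      · simp only [glueFun, takeF, h, dif_pos]
      · simp only [glueFun, dropF, h, dif_neg, not_false_iff]
        refine congrArg w (Fin.ext ?_)
        show 3 * (j + 1) + ((t : ℕ) - 3 * (j + 1)) = (t : ℕ)
        omega

/-- For every `n ≥ 1`, `A(n) = Σ_{i=0}^{n−1} A(i)·S(n−i)`. -/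
theorem A11_convolution (n : ℕ) (hn : 1 ≤ n) :
    A11 n = ∑ i ∈ Finset.range n, A11 i * Sprim (n - i) := by
  classical
  have hA : ∀ m, A11 m = Nat.card (FibT m) := fun _ => rfl
  have hS : ∀ k, Sprim k = Nat.card (PrimT k) := fun _ => rfl
  haveI : ∀ j : Fin n, Fintype (PrimT (j.1 + 1) × FibT (n - (j.1 + 1))) :=
    fun j => Fintype.ofFinite _
  calc A11 n = Nat.card (Σ j : Fin n, (PrimT (j.1 + 1) × FibT (n - (j.1 + 1)))) := by
        rw [hA]; exact (Nat.card_eq_of_bijective _ (glueMap_bijective n hn)).symm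
    _ = ∑ j : Fin n, Sprim (j.1 + 1) * A11 (n - (j.1 + 1)) := by
        rw [Nat.card_eq_fintype_card, Fintype.card_sigma]
        refine Fintype.sum_congr _ _ fun j => ?_
        rw [← Nat.card_eq_fintype_card, Nat.card_prod, hS, hA]
    _ = ∑ j ∈ Finset.range n, Sprim (j + 1) * A11 (n - (j + 1)) :=
        Fin.sum_univ_eq_sum_range (fun t => Sprim (t + 1) * A11 (n - (t + 1))) n
    _ = ∑ i ∈ Finset.range n, A11 i * Sprim (n - i) := by
        rw [← Finset.sum_range_reflect (fun i => A11 i * Sprim (n - i)) n]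
        refine Finset.sum_congr rfl fun j hj => ?_
        rw [Finset.mem_range] at hj
        rw [show n - 1 - j = n - (j + 1) by omega, show n - (n - (j + 1)) = j + 1 by omega,
          mul_comm]
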